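/- Suppose Φ : (0,r*) → (0,∞) is differentiable and satisfies Φ'(r) = (N−1)Φ(r)/r + 2Ψ(r) with rΨ(r)/Φ(r) ≤ C for all r ∈ (0,r*), where C > 0 is a constant. Then for every γ ∈ (0, r*/2), Φ(2γ) ≤ 2^{2C+N−1} Φ(γ). -/

import Mathlib

open MeasureTheory Metric Real Filter Bornology
open scoped Topology

noncomputable section

/-- `N`-dimensional Euclidean space. -/
abbrev ES (N : ℕ) : Type := EuclideanSpace ℝ (Fin N)

/-- Partial derivative of a complex-valued function in the `i`-th coordinate direction. -/
noncomputable def pd {N : ℕ} (i : Fin N) (f : ES N → ℂ) (x : ES N) : ℂ :=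
  fderiv ℝ f x (EuclideanSpace.single i 1)

/-- Partial derivative of a real-valued function in the `i`-th coordinate direction. -/
noncomputable def pdR {N : ℕ} (i : Fin N) (f : ES N → ℝ) (x : ES N) : ℝ :=
  fderiv ℝ f x (EuclideanSpace.single i 1)

/-- `∂ᵢ` of the `j`-th component of a vector field `V`, i.e. the entry `(DV)_{ij}` of the
Jacobian-type matrix `(DV)_{ij} = ∂ V_j / ∂ x_i`. -/
noncomputable def pdV {N : ℕ} (i j : Fin N) (V : ES N → ES N) (x : ES N) : ℝ :=
  fderiv ℝ (fun y => V y j) x (EuclideanSpace.single i 1)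

/-- `i`-th component of the magnetic gradient `H_A ω = i∇ω + Aω`. -/
noncomputable def magGrad {N : ℕ} (A : ES N → ES N) (ω : ES N → ℂ) (x : ES N) (i : Fin N) : ℂ :=
  Complex.I * pd i ω x + (A x i : ℂ) * ω x

/-- Squared modulus `|H_A ω|²` of the magnetic gradient. -/
noncomputable def magGradSq {N : ℕ} (A : ES N → ES N) (ω : ES N → ℂ) (x : ES N) : ℝ :=
  ∑ i, ‖magGrad A ω x i‖ ^ 2

/-- The electromagnetic Schrödinger equation
`-Δω + i A·∇ω + i ∇·(Aω) + |A|² ω = φ ω` holds pointwise on `s`. -/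
def IsSolutionOn {N : ℕ} (A : ES N → ES N) (φ ω : ES N → ℂ) (s : Set (ES N)) : Prop :=
  ∀ x ∈ s,
    -(∑ i, pd i (fun y => pd i ω y) x)
      + Complex.I * ∑ i, (A x i : ℂ) * pd i ω x
      + Complex.I * ∑ i, pd i (fun y => (A y i : ℂ) * ω y) x
      + ((∑ i, (A x i) ^ 2 : ℝ) : ℂ) * ω x
    = φ x * ω x

/-- Surface integral (real-valued integrand) over the sphere of radius `r` centred at the
origin, with respect to the `(N-1)`-dimensional Hausdorff measure. -/
noncomputable def sphInt {N : ℕ} (f : ES N → ℝ) (r : ℝ) : ℝ :=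
  ∫ x in sphere (0 : ES N) r, f x ∂μH[(N : ℝ) - 1]

/-- Surface integral (complex-valued integrand). -/
noncomputable def sphIntC {N : ℕ} (f : ES N → ℂ) (r : ℝ) : ℂ :=
  ∫ x in sphere (0 : ES N) r, f x ∂μH[(N : ℝ) - 1]

/-- Volume integral (real-valued integrand) over the open ball of radius `r` centred at the
origin. -/
noncomputable def ballInt {N : ℕ} (f : ES N → ℝ) (r : ℝ) : ℝ :=
  ∫ x in ball (0 : ES N) r, f x

/-- Volume integral (complex-valued integrand). -/
noncomputable def ballIntC {N : ℕ} (f : ES N → ℂ) (r : ℝ) : ℂ :=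
  ∫ x in ball (0 : ES N) r, f x

/-- `Φ(r) = ∫_{∂B_r} |ω|² dS`. -/
noncomputable def Phi {N : ℕ} (ω : ES N → ℂ) (r : ℝ) : ℝ :=
  sphInt (fun x => ‖ω x‖ ^ 2) r

/-- `Ψ(r) = ∫_{B_r} (|H_A ω|² - φ^R |ω|²) dV`. -/
noncomputable def Psi {N : ℕ} (A : ES N → ES N) (φ ω : ES N → ℂ) (r : ℝ) : ℝ :=
  ballInt (fun x => magGradSq A ω x - (φ x).re * ‖ω x‖ ^ 2) r

/-- `u ∈ L²_loc` vanishes of infinite order at `x₀`: for every `M ∈ ℕ` there are constants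
`C, R₀ > 0` with `∫_{|x - x₀| < R} |u|² ≤ C R^M` for all `0 < R < R₀`. -/
def VanishesInfOrder {N : ℕ} (u : ES N → ℂ) (x₀ : ES N) : Prop :=
  ∀ M : ℕ, ∃ C > (0 : ℝ), ∃ R₀ > (0 : ℝ), ∀ R : ℝ, 0 < R → R < R₀ →
    (∫ x in ball x₀ R, ‖u x‖ ^ 2) ≤ C * R ^ M

/-! With `K = 2C + N - 1`, the identity for `Φ'` and the frequency bound give
`r Φ'(r) = (N - 1) Φ(r) + 2 r Ψ(r) ≤ K Φ(r)`, i.e. `r ↦ r ^ (-K) Φ(r)` is nonincreasing;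
comparing its values at `γ` and `2γ` yields the factor `2 ^ K`. -/

section RpowWeighted

variable {f f' : ℝ → ℝ} {K a b : ℝ}

theorem antitoneOn_rpow_neg_mul_of_mul_deriv_le (ha : 0 < a)
    (hf : ∀ x ∈ Set.Icc a b, HasDerivAt f (f' x) x)
    (hle : ∀ x ∈ Set.Ioo a b, x * f' x ≤ K * f x) :
    AntitoneOn (fun x => x ^ (-K) * f x) (Set.Icc a b) := by
  have hderiv : ∀ x ∈ Set.Icc a b,
      HasDerivAt (fun x => x ^ (-K) * f x) (x ^ (-K - 1) * (x * f' x - K * f x)) x := by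
    intro x hx
    have hx0 : 0 < x := ha.trans_le hx.1
    have hpow : x ^ (-K) = x ^ (-K - 1) * x := by
      rw [Real.rpow_sub_one hx0.ne', div_mul_cancel₀ _ hx0.ne']
    refine ((hasDerivAt_rpow_const (Or.inl hx0.ne')).mul (hf x hx)).congr_deriv ?_
    rw [hpow]
    ring
  refine antitoneOn_of_hasDerivWithinAt_nonpos (convex_Icc a b)
    (fun x hx => (hderiv x hx).continuousAt.continuousWithinAt)
    (fun x hx => (hderiv x (interior_subset hx)).hasDerivWithinAt) fun x hx => ?_
  rw [interior_Icc] at hx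
  exact mul_nonpos_of_nonneg_of_nonpos (Real.rpow_nonneg (ha.trans hx.1).le _)
    (sub_nonpos.2 (hle x hx))

theorem le_div_rpow_mul_of_mul_deriv_le (ha : 0 < a) (hab : a ≤ b)
    (hf : ∀ x ∈ Set.Icc a b, HasDerivAt f (f' x) x)
    (hle : ∀ x ∈ Set.Ioo a b, x * f' x ≤ K * f x) :
    f b ≤ (b / a) ^ K * f a := by
  have hb : 0 < b := ha.trans_le hab
  have hanti : b ^ (-K) * f b ≤ a ^ (-K) * f a :=
    antitoneOn_rpow_neg_mul_of_mul_deriv_le ha hf hle ⟨le_rfl, hab⟩ ⟨hab, le_rfl⟩ hab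
  rw [Real.rpow_neg hb.le, Real.rpow_neg ha.le] at hanti
  rw [Real.div_rpow hb.le ha.le]
  have hbK : 0 < b ^ K := Real.rpow_pos_of_pos hb K
  calc f b = b ^ K * ((b ^ K)⁻¹ * f b) := by field_simp
    _ ≤ b ^ K * ((a ^ K)⁻¹ * f a) := by gcongr
    _ = b ^ K / a ^ K * f a := by ring

end RpowWeighted

theorem Phi_doubling_general
    (N : ℕ) (rstar : ℝ)
    (Φ Ψ : ℝ → ℝ) (C : ℝ)
    (hΦpos : ∀ r ∈ Set.Ioo (0 : ℝ) rstar, 0 < Φ r)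
    (hΦderiv : ∀ r ∈ Set.Ioo (0 : ℝ) rstar,
        HasDerivAt Φ (((N : ℝ) - 1) * Φ r / r + 2 * Ψ r) r)
    (hfreq : ∀ r ∈ Set.Ioo (0 : ℝ) rstar, r * Ψ r / Φ r ≤ C) :
    ∀ γ ∈ Set.Ioo (0 : ℝ) (rstar / 2),
      Φ (2 * γ) ≤ (2 : ℝ) ^ (2 * C + (N : ℝ) - 1) * Φ γ := by
  rintro γ ⟨hγ, hγr⟩
  have hIcc : Set.Icc γ (2 * γ) ⊆ Set.Ioo 0 rstar :=
    fun x hx => ⟨hγ.trans_le hx.1, hx.2.trans_lt (by linarith)⟩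
  have hgrowth : ∀ r ∈ Set.Ioo 0 rstar,
      r * (((N : ℝ) - 1) * Φ r / r + 2 * Ψ r) ≤ (2 * C + (N : ℝ) - 1) * Φ r := by
    intro r hr
    have hΨ : r * Ψ r ≤ C * Φ r := (div_le_iff₀ (hΦpos r hr)).1 (hfreq r hr)
    rw [mul_add, mul_div_cancel₀ _ hr.1.ne']
    linarith
  have h := le_div_rpow_mul_of_mul_deriv_le hγ (by linarith) (fun x hx => hΦderiv x (hIcc hx))
    (fun x hx => hgrowth x (hIcc (Set.Ioo_subset_Icc_self hx)))
  rwa [mul_div_cancel_right₀ 2 hγ.ne'] at h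

/-- The doubling estimate for `Φ`: if `Φ : (0,r*) → (0,∞)` is differentiable with
`Φ'(r) = (N-1)Φ(r)/r + 2Ψ(r)` and the frequency bound `rΨ(r)/Φ(r) ≤ C` holds on `(0,r*)`,
then for every `γ ∈ (0, r*/2)`, `Φ(2γ) ≤ 2^{2C+N-1} Φ(γ)`. -/
theorem Phi_doubling
    (N : ℕ) (hN : 2 ≤ N) (rstar : ℝ) (hrstar : rstar ∈ Set.Ioo (0 : ℝ) 1)
    (Φ Ψ : ℝ → ℝ) (C : ℝ) (hC : 0 < C)
    (hΦpos : ∀ r ∈ Set.Ioo (0 : ℝ) rstar, 0 < Φ r)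
    (hΦderiv : ∀ r ∈ Set.Ioo (0 : ℝ) rstar,
        HasDerivAt Φ (((N : ℝ) - 1) * Φ r / r + 2 * Ψ r) r)
    (hfreq : ∀ r ∈ Set.Ioo (0 : ℝ) rstar, r * Ψ r / Φ r ≤ C) :
    ∀ γ ∈ Set.Ioo (0 : ℝ) (rstar / 2),
      Φ (2 * γ) ≤ (2 : ℝ) ^ (2 * C + (N : ℝ) - 1) * Φ γ :=
  Phi_doubling_general N rstar Φ Ψ C hΦpos hΦderiv hfreq
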